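/- arXiv:2202.11689 — 2 statements merged into one kernel-verified Lean document; each statement's English description precedes it below -/
import Mathlib

section
/- (Correctness of the interval framer, discrete time.) Let A ∈ ℝ^{n×n}, C ∈ ℝ^{l×n}, L ∈ ℝ^{n×l}, let φ : ℝⁿ → ℝⁿ and ψ : ℝⁿ → ℝˡ have decomposition functions φ_d and ψ_d, respectively. Let (x_t)_{t∈ℕ} satisfy the plant dynamics x_{t+1} = A x_t + φ(x_t) with outputs y_t = C x_t + ψ(x_t), and let (x̄_t), (x̲_t) satisfy the observer dynamics x̄_{t+1} = (A−LC)⁺ x̄_t − (A−LC)⁻ x̲_t + L y_t + φ_d(x̄_t, x̲_t) − L⁺ ψ_d(x̲_t, x̄_t) + L⁻ ψ_d(x̄_t, x̲_t) and x̲_{t+1} = (A−LC)⁺ x̲_t − (A−LC)⁻ x̄_t + L y_t + φ_d(x̲_t, x̄_t) − L⁺ ψ_d(x̄_t, x̲_t) + L⁻ ψ_d(x̲_t, x̄_t). If x̲₀ ≤ x₀ ≤ x̄₀, then x̲_t ≤ x_t ≤ x̄_t for all t ∈ ℕ. -/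
open Matrix

/-- Entrywise positive part `M⁺ = max(M,0)`. -/
noncomputable def entPos {p n : ℕ} (M : Matrix (Fin p) (Fin n) ℝ) : Matrix (Fin p) (Fin n) ℝ :=
  Matrix.of fun i j => max (M i j) 0

/-- Entrywise negative part `M⁻ = M⁺ - M`. -/
noncomputable def entNeg {p n : ℕ} (M : Matrix (Fin p) (Fin n) ℝ) : Matrix (Fin p) (Fin n) ℝ :=
  entPos M - M

/-- Entrywise absolute value `|M| = M⁺ + M⁻`. -/
noncomputable def entAbs {p n : ℕ} (M : Matrix (Fin p) (Fin n) ℝ) : Matrix (Fin p) (Fin n) ℝ :=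
  entPos M + entNeg M

/-- `M^d`: the diagonal matrix with the same diagonal as `M`. -/
def diagPart {n : ℕ} (M : Matrix (Fin n) (Fin n) ℝ) : Matrix (Fin n) (Fin n) ℝ :=
  Matrix.diagonal fun i => M i i

/-- `M^{nd} = M - M^d`. -/
def offDiagPart {n : ℕ} (M : Matrix (Fin n) (Fin n) ℝ) : Matrix (Fin n) (Fin n) ℝ := M - diagPart M

/-- `M^m = M^d + |M^{nd}|`. -/
noncomputable def metzPart {n : ℕ} (M : Matrix (Fin n) (Fin n) ℝ) : Matrix (Fin n) (Fin n) ℝ :=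
  diagPart M + entAbs (offDiagPart M)

/-- A square real matrix is Metzler if all off-diagonal entries are nonnegative. -/
def Metzler {n : ℕ} (M : Matrix (Fin n) (Fin n) ℝ) : Prop := ∀ i j, i ≠ j → 0 ≤ M i j

/-- `gd` is a (discrete-time mixed-monotone) decomposition function of `g`. -/
def IsDecompositionFunction {n p : ℕ} (g : (Fin n → ℝ) → Fin p → ℝ)
    (gd : (Fin n → ℝ) → (Fin n → ℝ) → Fin p → ℝ) : Prop :=
  (∀ x, gd x x = g x) ∧
  (∀ x x' x₂, x ≤ x' → gd x x₂ ≤ gd x' x₂) ∧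
  (∀ x x' x₁, x ≤ x' → gd x₁ x' ≤ gd x₁ x)

lemma mulVec_mono {p q : ℕ} {M : Matrix (Fin p) (Fin q) ℝ} (hM : ∀ i j, 0 ≤ M i j)
    {u v : Fin q → ℝ} (h : u ≤ v) : M.mulVec u ≤ M.mulVec v := by
  intro i
  simp only [Matrix.mulVec, dotProduct]
  exact Finset.sum_le_sum fun j _ => mul_le_mul_of_nonneg_left (h j) (hM i j)

lemma entPos_nonneg {p q : ℕ} (M : Matrix (Fin p) (Fin q) ℝ) : ∀ i j, 0 ≤ entPos M i j :=
  fun i j => le_max_right _ _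

lemma entNeg_nonneg {p q : ℕ} (M : Matrix (Fin p) (Fin q) ℝ) : ∀ i j, 0 ≤ entNeg M i j := by
  intro i j
  simp [entNeg, entPos, Matrix.sub_apply, le_max_left]

lemma mulVec_pos_sub_neg {p q : ℕ} (M : Matrix (Fin p) (Fin q) ℝ) (v : Fin q → ℝ) :
    (entPos M).mulVec v - (entNeg M).mulVec v = M.mulVec v := by
  rw [← Matrix.sub_mulVec]
  congr 1
  simp [entNeg]

/-- correctness of the interval framer, discrete time. -/
theorem statement10 {n l : ℕ} (A : Matrix (Fin n) (Fin n) ℝ) (C : Matrix (Fin l) (Fin n) ℝ)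
    (L : Matrix (Fin n) (Fin l) ℝ)
    (φ : (Fin n → ℝ) → Fin n → ℝ) (ψ : (Fin n → ℝ) → Fin l → ℝ)
    (φd : (Fin n → ℝ) → (Fin n → ℝ) → Fin n → ℝ)
    (ψd : (Fin n → ℝ) → (Fin n → ℝ) → Fin l → ℝ)
    (hφ : IsDecompositionFunction φ φd) (hψ : IsDecompositionFunction ψ ψd)
    (x xu xl : ℕ → Fin n → ℝ) (y : ℕ → Fin l → ℝ)
    (hx : ∀ t, x (t + 1) = A.mulVec (x t) + φ (x t))
    (hy : ∀ t, y t = C.mulVec (x t) + ψ (x t))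
    (hxu : ∀ t, xu (t + 1) =
      (entPos (A - L * C)).mulVec (xu t) - (entNeg (A - L * C)).mulVec (xl t)
        + L.mulVec (y t) + φd (xu t) (xl t)
        - (entPos L).mulVec (ψd (xl t) (xu t)) + (entNeg L).mulVec (ψd (xu t) (xl t)))
    (hxl : ∀ t, xl (t + 1) =
      (entPos (A - L * C)).mulVec (xl t) - (entNeg (A - L * C)).mulVec (xu t)
        + L.mulVec (y t) + φd (xl t) (xu t)
        - (entPos L).mulVec (ψd (xu t) (xl t)) + (entNeg L).mulVec (ψd (xl t) (xu t)))
    (h0l : xl 0 ≤ x 0) (h0u : x 0 ≤ xu 0) :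
    ∀ t, xl t ≤ x t ∧ x t ≤ xu t := by
  obtain ⟨hφ1, hφ2, hφ3⟩ := hφ
  obtain ⟨hψ1, hψ2, hψ3⟩ := hψ
  intro t
  induction t with
  | zero => exact ⟨h0l, h0u⟩
  | succ t ih =>
    obtain ⟨ihl, ihu⟩ := ih
    set M := A - L * C with hM
    have key : x (t + 1) =
        (entPos M).mulVec (x t) - (entNeg M).mulVec (x t)
          + L.mulVec (y t) + φd (x t) (x t)
          - (entPos L).mulVec (ψd (x t) (x t)) + (entNeg L).mulVec (ψd (x t) (x t)) := by
      have h1 : L.mulVec (y t) = L.mulVec (C.mulVec (x t)) + L.mulVec (ψ (x t)) := by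
        rw [hy t, Matrix.mulVec_add]
      have h3 : (entPos M).mulVec (x t) - (entNeg M).mulVec (x t)
          = A.mulVec (x t) - L.mulVec (C.mulVec (x t)) := by
        rw [mulVec_pos_sub_neg, hM, Matrix.sub_mulVec, Matrix.mulVec_mulVec]
      rw [hx t, hψ1, hφ1, h3, h1, ← mulVec_pos_sub_neg L (ψ (x t))]
      abel
    constructor
    · rw [hxl t, key]
      refine add_le_add (sub_le_sub (add_le_add (add_le_add (sub_le_sub ?_ ?_) le_rfl) ?_) ?_) ?_
      · exact mulVec_mono (entPos_nonneg M) ihl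
      · exact mulVec_mono (entNeg_nonneg M) ihu
      · exact le_trans (hφ3 _ _ _ ihu) (hφ2 _ _ _ ihl)
      · exact mulVec_mono (entPos_nonneg L) (le_trans (hψ2 _ _ _ ihu) (hψ3 _ _ _ ihl))
      · exact mulVec_mono (entNeg_nonneg L) (le_trans (hψ2 _ _ _ ihl) (hψ3 _ _ _ ihu))
    · rw [hxu t, key]
      refine add_le_add (sub_le_sub (add_le_add (add_le_add (sub_le_sub ?_ ?_) le_rfl) ?_) ?_) ?_
      · exact mulVec_mono (entPos_nonneg M) ihu
      · exact mulVec_mono (entNeg_nonneg M) ihl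
      · exact le_trans (hφ2 _ _ _ ihu) (hφ3 _ _ _ ihl)
      · exact mulVec_mono (entPos_nonneg L) (le_trans (hψ2 _ _ _ ihl) (hψ3 _ _ _ ihu))
      · exact le_trans (hψ2 _ _ _ ihu) (hψ3 _ _ _ ihl) |> mulVec_mono (entNeg_nonneg L)
end

section
/- (Continuous-time framer-error dynamics and comparison bound.) Let A ∈ ℝ^{n×n}, C ∈ ℝ^{l×n}, L ∈ ℝ^{n×l}, set M := A − LC, M^↑ := M^d + (M^{nd})⁺ and M^↓ := (M^{nd})⁻. Let φ_d : ℝⁿ×ℝⁿ → ℝⁿ and ψ_d : ℝⁿ×ℝⁿ → ℝˡ be arbitrary maps, and let x̄, x̲ : [0,∞) → ℝⁿ be differentiable and satisfy d x̄_t/dt = M^↑ x̄_t − M^↓ x̲_t + v_t + φ_d(x̄_t, x̲_t) − L⁺ ψ_d(x̲_t, x̄_t) + L⁻ ψ_d(x̄_t, x̲_t) and d x̲_t/dt = M^↑ x̲_t − M^↓ x̄_t + v_t + φ_d(x̲_t, x̄_t) − L⁺ ψ_d(x̄_t, x̲_t) + L⁻ ψ_d(x̲_t, x̄_t), where v_t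 ∈ ℝⁿ is any common input. Let ε_t := x̄_t − x̲_t, Δφ_d(t) := φ_d(x̄_t,x̲_t) − φ_d(x̲_t,x̄_t) and Δψ_d(t) := ψ_d(x̄_t,x̲_t) − ψ_d(x̲_t,x̄_t). Then dε_t/dt = (M^d + |M^{nd}|) ε_t + Δφ_d(t) + |L| Δψ_d(t). If moreover ε_t ≥ 0 and Δφ_d(t) ≤ F̄_φ ε_t, Δψ_d(t) ≤ F̄_ψ ε_t for matrices F̄_φ ∈ ℝ^{n×n}, F̄_ψ ∈ ℝ^{l×n}, then dε_t/dt ≤ (A^m + (−LC)^m + F̄_φ + |L| F̄_ψ) ε_t componentwise. -/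
open Matrix

/-!
Subtracting the two framer equations, the input `v` cancels, the cross terms `M^↓ x̲` and
`M^↓ x̄` change sign and join `M^↑`, so that `M^↑ + M^↓ = M^d + |M^{nd}|`, and the output
injections combine into `(L⁺ + L⁻) Δψ_d = |L| Δψ_d`. For the comparison bound, the
off-diagonal entries of `M = A + (-LC)` satisfy `|a + b| ≤ |a| + |b|`; an entrywise matrix
inequality is preserved on the nonnegative vector `ε`, and the nonnegative matrix `|L|`
preserves `Δψ_d ≤ F̄_ψ ε`.
-/

open Matrix

lemma entAbs_apply {p n : ℕ} (M : Matrix (Fin p) (Fin n) ℝ) (i : Fin p) (j : Fin n) :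
    entAbs M i j = |M i j| := by
  simp only [entAbs, entPos, entNeg, Matrix.add_apply, Matrix.sub_apply, of_apply]
  rcases le_total (M i j) 0 with h | h
  · rw [abs_of_nonpos h, max_eq_right h]; ring
  · rw [abs_of_nonneg h, max_eq_left h]; ring

lemma entAbs_nonneg {p n : ℕ} (M : Matrix (Fin p) (Fin n) ℝ) (i : Fin p) (j : Fin n) :
    0 ≤ entAbs M i j :=
  entAbs_apply M i j ▸ abs_nonneg _

lemma diagPart_add_entPos_add_entNeg {n : ℕ} (M : Matrix (Fin n) (Fin n) ℝ) :
    diagPart M + entPos (offDiagPart M) + entNeg (offDiagPart M) = metzPart M :=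
  add_assoc _ _ _

lemma metzPart_add_apply_le {n : ℕ} (A B : Matrix (Fin n) (Fin n) ℝ) (i j : Fin n) :
    metzPart (A + B) i j ≤ metzPart A i j + metzPart B i j := by
  by_cases hij : i = j
  · subst hij
    simp [metzPart, offDiagPart, entAbs_apply, diagPart]
  · simpa [metzPart, offDiagPart, entAbs_apply, diagPart, diagonal_apply_ne _ hij]
      using abs_add_le (A i j) (B i j)

section Monotonicity

variable {m k R : Type*} [Fintype k] [Semiring R] [PartialOrder R] [IsOrderedRing R]

lemma mulVec_le_mulVec_of_apply_le {M N : Matrix m k R} {x : k → R}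
    (hMN : ∀ i j, M i j ≤ N i j) (hx : 0 ≤ x) : M *ᵥ x ≤ N *ᵥ x :=
  fun i => dotProduct_le_dotProduct_of_nonneg_right (hMN i) hx

lemma mulVec_le_mulVec_of_nonneg {M : Matrix m k R} {x y : k → R}
    (hM : ∀ i j, 0 ≤ M i j) (hxy : x ≤ y) : M *ᵥ x ≤ M *ᵥ y :=
  fun i => dotProduct_le_dotProduct_of_nonneg_left hxy (hM i)

end Monotonicity

lemma framer_field_sub {m k R : Type*} [Fintype m] [Fintype k] [Ring R]
    (P N : Matrix m m R) (Lp Ln : Matrix m k R) (x y w a b : m → R) (c d : k → R) :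
    (P *ᵥ x - N *ᵥ y + w + a - Lp *ᵥ d + Ln *ᵥ c)
      - (P *ᵥ y - N *ᵥ x + w + b - Lp *ᵥ c + Ln *ᵥ d)
      = (P + N) *ᵥ (x - y) + (a - b) + (Lp + Ln) *ᵥ (c - d) := by
  simp only [add_mulVec, mulVec_sub]
  abel

/-- continuous-time framer-error dynamics and comparison bound. -/
theorem statement14 {n l : ℕ} (A : Matrix (Fin n) (Fin n) ℝ) (C : Matrix (Fin l) (Fin n) ℝ)
    (L : Matrix (Fin n) (Fin l) ℝ)
    (M Mup Mdn : Matrix (Fin n) (Fin n) ℝ)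
    (hM : M = A - L * C)
    (hMup : Mup = diagPart M + entPos (offDiagPart M))
    (hMdn : Mdn = entNeg (offDiagPart M))
    (φd : (Fin n → ℝ) → (Fin n → ℝ) → Fin n → ℝ)
    (ψd : (Fin n → ℝ) → (Fin n → ℝ) → Fin l → ℝ)
    (v : ℝ → Fin n → ℝ) (xu xl : ℝ → Fin n → ℝ)
    (hxu : ∀ t ≥ (0 : ℝ), HasDerivAt xu
      (Mup.mulVec (xu t) - Mdn.mulVec (xl t) + v t + φd (xu t) (xl t)
        - (entPos L).mulVec (ψd (xl t) (xu t)) + (entNeg L).mulVec (ψd (xu t) (xl t))) t)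
    (hxl : ∀ t ≥ (0 : ℝ), HasDerivAt xl
      (Mup.mulVec (xl t) - Mdn.mulVec (xu t) + v t + φd (xl t) (xu t)
        - (entPos L).mulVec (ψd (xu t) (xl t)) + (entNeg L).mulVec (ψd (xl t) (xu t))) t)
    (ε : ℝ → Fin n → ℝ) (hε : ∀ t, ε t = xu t - xl t)
    (Δφ : ℝ → Fin n → ℝ) (hΔφ : ∀ t, Δφ t = φd (xu t) (xl t) - φd (xl t) (xu t))
    (Δψ : ℝ → Fin l → ℝ) (hΔψ : ∀ t, Δψ t = ψd (xu t) (xl t) - ψd (xl t) (xu t)) :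
    -- error dynamics: dε/dt = (M^d + |M^{nd}|) ε + Δφ_d + |L| Δψ_d
    (∀ t ≥ (0 : ℝ), HasDerivAt ε
      ((diagPart M + entAbs (offDiagPart M)).mulVec (ε t) + Δφ t
        + (entAbs L).mulVec (Δψ t)) t) ∧
    -- comparison bound
    (∀ (Fφ : Matrix (Fin n) (Fin n) ℝ) (Fψ : Matrix (Fin l) (Fin n) ℝ),
      (∀ t ≥ (0 : ℝ), 0 ≤ ε t) →
      (∀ t ≥ (0 : ℝ), Δφ t ≤ Fφ.mulVec (ε t)) →
      (∀ t ≥ (0 : ℝ), Δψ t ≤ Fψ.mulVec (ε t)) →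
      ∀ t ≥ (0 : ℝ),
        (diagPart M + entAbs (offDiagPart M)).mulVec (ε t) + Δφ t
            + (entAbs L).mulVec (Δψ t)
          ≤ (metzPart A + metzPart (-(L * C)) + Fφ + (entAbs L) * Fψ).mulVec (ε t)) := by
  rw [show ε = xu - xl from funext hε]
  constructor
  · intro t ht
    refine ((hxu t ht).sub (hxl t ht)).congr_deriv ?_
    rw [framer_field_sub, hMup, hMdn, diagPart_add_entPos_add_entNeg, hΔφ, hΔψ]
    rfl
  · intro Fφ Fψ hε_nonneg hφ hψ t ht
    have hM_le : ∀ i j, metzPart M i j ≤ (metzPart A + metzPart (-(L * C))) i j := by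
      rw [hM, sub_eq_add_neg]
      exact metzPart_add_apply_le A _
    have hψ_le : entAbs L *ᵥ Δψ t ≤ (entAbs L * Fψ) *ᵥ (xu - xl) t := by
      rw [← mulVec_mulVec]
      exact mulVec_le_mulVec_of_nonneg (entAbs_nonneg L) (hψ t ht)
    calc metzPart M *ᵥ (xu - xl) t + Δφ t + entAbs L *ᵥ Δψ t
        ≤ (metzPart A + metzPart (-(L * C))) *ᵥ (xu - xl) t + Fφ *ᵥ (xu - xl) t
            + (entAbs L * Fψ) *ᵥ (xu - xl) t := by
          gcongr ?_ + ?_ + ?_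
          · exact mulVec_le_mulVec_of_apply_le hM_le (hε_nonneg t ht)
          · exact hφ t ht
      _ = _ := by simp only [add_mulVec]
end
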